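/- arXiv:2204.08247 — 2 statements merged into one kernel-verified Lean document; each statement's English description precedes it below -/
import Mathlib

section
/- Let M ∈ ℝ^{n×c} with n ≥ c, and let Mᵀ = U Σ Vᵀ be a singular value decomposition with U ∈ ℝ^{c×c}, V ∈ ℝ^{n×n} orthogonal. Then H* = V I_{n×c} Uᵀ maximizes Tr(M Hᵀ) over all H ∈ ℝ^{n×c} with HᵀH = I, and the maximum value is the sum of the singular values of M. -/
open Matrix BigOperators Finset

lemma EtE (n c : ℕ) (hnc : c ≤ n) (E : Matrix (Fin n) (Fin c) ℝ)
    (hE : ∀ i j, E i j = if (i : ℕ) = (j : ℕ) then 1 else 0) : Eᵀ * E = 1 := by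
  ext i j
  simp only [Matrix.mul_apply, Matrix.transpose_apply, hE]
  rw [Finset.sum_eq_single (Fin.castLE hnc i)]
  · simp [Matrix.one_apply, Fin.ext_iff]
  · intro k _ hk
    have : (k : ℕ) ≠ (i : ℕ) := fun h => hk (Fin.ext (by simpa using h))
    simp [this]
  · simp

lemma traceSig (n c : ℕ) (hnc : c ≤ n) (Sig : Matrix (Fin c) (Fin n) ℝ)
    (hSigdiag : ∀ (i : Fin c) (j : Fin n), (i : ℕ) ≠ (j : ℕ) → Sig i j = 0)
    (Z : Matrix (Fin c) (Fin n) ℝ) :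
    (Sigᵀ * Z).trace = ∑ j : Fin c, Sig j (Fin.castLE hnc j) * Z j (Fin.castLE hnc j) := by
  rw [Matrix.trace]
  simp only [Matrix.diag_apply, Matrix.mul_apply, Matrix.transpose_apply]
  rw [Finset.sum_comm]
  refine Finset.sum_congr rfl fun j _ => ?_
  rw [Finset.sum_eq_single (Fin.castLE hnc j)]
  · intro k _ hk
    have : (j : ℕ) ≠ (k : ℕ) := fun h => hk (Fin.ext (by simpa using h.symm))
    simp [hSigdiag _ _ this]
  · simp

lemma rowbound (n c : ℕ) (Z : Matrix (Fin c) (Fin n) ℝ) (hZ : Z * Zᵀ = 1)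
    (j : Fin c) (k : Fin n) : Z j k ≤ 1 := by
  have h : ∑ l, Z j l * Z j l = 1 := by
    have := congrFun (congrFun hZ j) j
    simpa [Matrix.mul_apply, Matrix.one_apply] using this
  have h1 : Z j k * Z j k ≤ 1 := by
    rw [← h]
    exact Finset.single_le_sum (f := fun l => Z j l * Z j l)
      (fun l _ => mul_self_nonneg _) (Finset.mem_univ k)
  nlinarith

/-- Orthogonal Procrustes: if `Mᵀ = U Sig Vᵀ` is an SVD (`U ∈ ℝ^{c×c}`, `V ∈ ℝ^{n×n}`
orthogonal, `Sig ∈ ℝ^{c×n}` rectangular-diagonal with nonnegative entries), `n ≥ c`,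
then `H* = V I_{n×c} Uᵀ` maximizes `Tr(M Hᵀ)` over `HᵀH = I`, with maximum value the
sum of the singular values of `M`. -/
theorem procrustes_svd_solution (n c : ℕ) (hnc : c ≤ n)
    (M : Matrix (Fin n) (Fin c) ℝ)
    (U : Matrix (Fin c) (Fin c) ℝ) (V : Matrix (Fin n) (Fin n) ℝ)
    (Sig : Matrix (Fin c) (Fin n) ℝ)
    (hU : Uᵀ * U = 1) (hU' : U * Uᵀ = 1)
    (hV : Vᵀ * V = 1) (hV' : V * Vᵀ = 1)
    (hSigdiag : ∀ (i : Fin c) (j : Fin n), (i : ℕ) ≠ (j : ℕ) → Sig i j = 0)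
    (hSignonneg : ∀ i j, 0 ≤ Sig i j)
    (hSVD : Mᵀ = U * Sig * Vᵀ)
    (E : Matrix (Fin n) (Fin c) ℝ) (hE : ∀ i j, E i j = if (i : ℕ) = (j : ℕ) then 1 else 0)
    (Hstar : Matrix (Fin n) (Fin c) ℝ) (hHstar : Hstar = V * E * Uᵀ) :
    Hstarᵀ * Hstar = 1 ∧
      (∀ H : Matrix (Fin n) (Fin c) ℝ, Hᵀ * H = 1 →
        (M * Hᵀ).trace ≤ (M * Hstarᵀ).trace) ∧
      (M * Hstarᵀ).trace = ∑ i : Fin c, Sig i (Fin.castLE hnc i) := by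
  have hM : M = V * Sigᵀ * Uᵀ := by
    have := congrArg Matrix.transpose hSVD
    simpa [Matrix.transpose_mul, Matrix.mul_assoc] using this
  have hEtE : Eᵀ * E = 1 := EtE n c hnc E hE
  -- general trace formula
  have htr : ∀ H : Matrix (Fin n) (Fin c) ℝ,
      (M * Hᵀ).trace = ∑ j : Fin c, Sig j (Fin.castLE hnc j) *
        (Uᵀ * Hᵀ * V) j (Fin.castLE hnc j) := by
    intro H
    have : M * Hᵀ = V * (Sigᵀ * (Uᵀ * Hᵀ)) := by
      rw [hM]; rw [Matrix.mul_assoc, Matrix.mul_assoc]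
    rw [this, Matrix.trace_mul_comm, Matrix.mul_assoc, Matrix.mul_assoc,
      ← Matrix.mul_assoc Uᵀ]
    exact traceSig n c hnc Sig hSigdiag _
  -- Z for Hstar is Eᵀ
  have hZstar : Uᵀ * Hstarᵀ * V = Eᵀ := by
    rw [hHstar]
    simp only [Matrix.transpose_mul, Matrix.transpose_transpose]
    calc Uᵀ * (U * (Eᵀ * Vᵀ)) * V = (Uᵀ * U) * Eᵀ * (Vᵀ * V) := by
          simp only [Matrix.mul_assoc]
      _ = Eᵀ := by rw [hU, hV, Matrix.one_mul, Matrix.mul_one]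
  have htrstar : (M * Hstarᵀ).trace = ∑ i : Fin c, Sig i (Fin.castLE hnc i) := by
    rw [htr Hstar, hZstar]
    refine Finset.sum_congr rfl fun j _ => ?_
    simp [Matrix.transpose_apply, hE]
  refine ⟨?_, ?_, htrstar⟩
  · rw [hHstar]
    simp only [Matrix.transpose_mul, Matrix.transpose_transpose]
    calc U * (Eᵀ * Vᵀ) * (V * E * Uᵀ) = U * (Eᵀ * ((Vᵀ * V) * E)) * Uᵀ := by
          simp only [Matrix.mul_assoc]
      _ = 1 := by rw [hV, Matrix.one_mul, hEtE, Matrix.mul_one, hU']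
  · intro H hH
    rw [htr H, htrstar]
    have hZZ : (Uᵀ * Hᵀ * V) * (Uᵀ * Hᵀ * V)ᵀ = 1 := by
      simp only [Matrix.transpose_mul, Matrix.transpose_transpose]
      calc Uᵀ * Hᵀ * V * (Vᵀ * (H * U)) = Uᵀ * ((Hᵀ * ((V * Vᵀ) * H)) * U) := by
            simp only [Matrix.mul_assoc]
        _ = 1 := by rw [hV', Matrix.one_mul, hH, Matrix.one_mul, hU]
    refine Finset.sum_le_sum fun j _ => ?_
    have := rowbound n c _ hZZ j (Fin.castLE hnc j)
    nlinarith [hSignonneg j (Fin.castLE hnc j)]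
end

section
/- Let ψ(W) denote ‖WᵀX − Bᵀ‖_F² + γ Tr(Wᵀ X L Xᵀ W), and for W with nonzero rows let D(W) be the diagonal matrix with entries 1/(2‖w_{i·}‖₂). Suppose W_{t+1} minimizes ψ(W) + η Tr(Wᵀ D(W_t) W). Then ψ(W_{t+1}) + η ‖W_{t+1}‖_{2,1} ≤ ψ(W_t) + η ‖W_t‖_{2,1}, where ‖W‖_{2,1} = Σ_i ‖w_{i·}‖₂. -/
open Matrix BigOperators Finset

/-- Iterative-reweighting descent: if `W_{t+1}` minimizes the surrogate
`ψ(W) + η Tr(Wᵀ D(W_t) W)` with `D(W_t) = diag(1/(2‖w_{i·,t}‖₂))`, then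
`ψ(W_{t+1}) + η ‖W_{t+1}‖_{2,1} ≤ ψ(W_t) + η ‖W_t‖_{2,1}`. -/
theorem reweighted_l21_descent (m n c : ℕ)
    (X : Matrix (Fin m) (Fin n) ℝ) (B : Matrix (Fin n) (Fin c) ℝ)
    (L : Matrix (Fin n) (Fin n) ℝ) (hL : L.PosSemidef)
    (η γ : ℝ) (hη : 0 ≤ η) (hγ : 0 ≤ γ)
    (ψ : Matrix (Fin m) (Fin c) ℝ → ℝ)
    (hψ : ∀ W, ψ W = ((Wᵀ * X - Bᵀ) * (Wᵀ * X - Bᵀ)ᵀ).trace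
        + γ * (Wᵀ * X * L * Xᵀ * W).trace)
    (norm21 : Matrix (Fin m) (Fin c) ℝ → ℝ)
    (hnorm21 : ∀ W, norm21 W = ∑ i : Fin m, Real.sqrt (∑ j : Fin c, (W i j) ^ 2))
    (Wt Wt1 : Matrix (Fin m) (Fin c) ℝ)
    (hWtRows : ∀ i, Wt i ≠ 0) (hWt1Rows : ∀ i, Wt1 i ≠ 0)
    (Dt : Matrix (Fin m) (Fin m) ℝ)
    (hDt : Dt = Matrix.diagonal (fun i => 1 / (2 * Real.sqrt (∑ j : Fin c, (Wt i j) ^ 2))))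
    (hMin : ∀ W : Matrix (Fin m) (Fin c) ℝ,
      ψ Wt1 + η * (Wt1ᵀ * Dt * Wt1).trace ≤ ψ W + η * (Wᵀ * Dt * W).trace) :
    ψ Wt1 + η * norm21 Wt1 ≤ ψ Wt + η * norm21 Wt := by
  have key := hMin Wt
  set s : Fin m → ℝ := fun i => Real.sqrt (∑ j : Fin c, (Wt i j) ^ 2) with hs_def
  have hs : ∀ i, 0 < s i := by
    intro i
    apply Real.sqrt_pos.2
    have hex : ∃ j, Wt i j ≠ 0 := by
      by_contra h; push_neg at h; exact hWtRows i (funext h)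
    obtain ⟨j, hj⟩ := hex
    calc (0:ℝ) < (Wt i j)^2 := by positivity
      _ ≤ ∑ j, (Wt i j)^2 := Finset.single_le_sum (f := fun k => (Wt i k)^2) (fun k _ => sq_nonneg _) (Finset.mem_univ j)
  have htr : ∀ W : Matrix (Fin m) (Fin c) ℝ, (Wᵀ * Dt * W).trace
      = ∑ i : Fin m, (∑ j : Fin c, (W i j)^2) / (2 * s i) := by
    intro W
    rw [Matrix.trace]
    simp only [Matrix.diag, Matrix.mul_apply, Matrix.transpose_apply, hDt,
      Matrix.diagonal_apply, mul_ite, mul_zero, ite_mul, zero_mul,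
      Finset.sum_ite_eq, Finset.sum_ite_eq', Finset.mem_univ, if_true]
    rw [Finset.sum_comm]
    refine Finset.sum_congr rfl fun i _ => ?_
    have hsi : s i = Real.sqrt (∑ j : Fin c, (Wt i j)^2) := rfl
    have hne : Real.sqrt (∑ j : Fin c, (Wt i j)^2) ≠ 0 := ne_of_gt (hsi ▸ hs i)
    rw [hsi, Finset.sum_div]
    apply Finset.sum_congr rfl
    intro k _
    rw [sq]
    field_simp
  have hrow : ∀ i : Fin m, Real.sqrt (∑ j : Fin c, (Wt1 i j)^2) - (∑ j : Fin c, (Wt1 i j)^2) / (2 * s i)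
      ≤ Real.sqrt (∑ j : Fin c, (Wt i j)^2) - (∑ j : Fin c, (Wt i j)^2) / (2 * s i) := by
    intro i
    have ha : 0 < s i := hs i
    set a := s i
    set b := Real.sqrt (∑ j : Fin c, (Wt1 i j)^2) with hb_def
    have hb2 : b^2 = ∑ j : Fin c, (Wt1 i j)^2 := Real.sq_sqrt (by positivity)
    have ha2 : a^2 = ∑ j : Fin c, (Wt i j)^2 := Real.sq_sqrt (by positivity)
    have hA : Real.sqrt (∑ j : Fin c, (Wt i j)^2) = a := rfl
    rw [← hb2, hA, ← ha2]
    have h2a : (0:ℝ) < 2*a := by linarith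
    have key2 : 2*a*b - b^2 ≤ a^2 := by nlinarith [sq_nonneg (a-b)]
    have e1 : b - b^2/(2*a) = (2*a*b - b^2)/(2*a) := by field_simp
    have e2 : a - a^2/(2*a) = a^2/(2*a) := by field_simp; ring
    rw [e1, e2]
    gcongr
  have hsum : norm21 Wt1 - (Wt1ᵀ * Dt * Wt1).trace ≤ norm21 Wt - (Wtᵀ * Dt * Wt).trace := by
    rw [hnorm21, hnorm21, htr, htr, ← Finset.sum_sub_distrib, ← Finset.sum_sub_distrib]
    exact Finset.sum_le_sum fun i _ => hrow i
  have := mul_le_mul_of_nonneg_left hsum hη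
  nlinarith [this, key]
end
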